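/- arXiv:2105.14443 — 2 statements merged into one kernel-verified Lean document; each statement's English description precedes it below -/
import Mathlib

section
/- The transformation T from Cartesian variables (x,y,X,Y) to epicyclic variables (φ,q,Φ,Q) defined by x = 2bξ + b sin φ, y = aη + a cos φ, X = −2Bη − B cos φ, Y = −Bξ − B sin φ, with a = 2b, B = bω, b = √(2Φ/ω), ξ = Q/(2kB), η = 2kq/a, is canonical; i.e., it preserves the symplectic form dx∧dX + dy∧dY = dφ∧dΦ + dq∧dQ. -/
open Real

noncomputable section

/-- Partial derivatives of a function of four real variables, slot by slot. -/
def pd1 (f : ℝ → ℝ → ℝ → ℝ → ℝ) (a b c d : ℝ) : ℝ := deriv (fun t => f t b c d) a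
def pd2 (f : ℝ → ℝ → ℝ → ℝ → ℝ) (a b c d : ℝ) : ℝ := deriv (fun t => f a t c d) b
def pd3 (f : ℝ → ℝ → ℝ → ℝ → ℝ) (a b c d : ℝ) : ℝ := deriv (fun t => f a b t d) c
def pd4 (f : ℝ → ℝ → ℝ → ℝ → ℝ) (a b c d : ℝ) : ℝ := deriv (fun t => f a b c t) d

/-- Poisson bracket with respect to the canonical pairs (φ,Φ) (slots 1,3) and
(q,Q) (slots 2,4); the bracket conditions `{x,X}=1`, `{y,Y}=1`, all other brackets
zero, are equivalent to preservation of the symplectic form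
`dx∧dX + dy∧dY = dφ∧dΦ + dq∧dQ`. -/
def pb (f g : ℝ → ℝ → ℝ → ℝ → ℝ) (a b c d : ℝ) : ℝ :=
  pd1 f a b c d * pd3 g a b c d - pd3 f a b c d * pd1 g a b c d
  + pd2 f a b c d * pd4 g a b c d - pd4 f a b c d * pd2 g a b c d

/-- `b = √(2Φ/ω)`. -/
def bb (ω Φ : ℝ) : ℝ := Real.sqrt (2*Φ/ω)
/-- `ξ = Q/(2kωb)` (with `B = bω`, this is `Q/(2kB)`). -/
def xiF (ω k Φ Q : ℝ) : ℝ := Q / (2*k*ω*bb ω Φ)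
/-- `η = kq/b` (with `a = 2b`, this is `2kq/a`). -/
def etaF (ω k q Φ : ℝ) : ℝ := k*q / bb ω Φ

/-- `x = 2bξ + b sin φ`. -/
def xF (ω k : ℝ) (φ q Φ Q : ℝ) : ℝ := 2*bb ω Φ*xiF ω k Φ Q + bb ω Φ * Real.sin φ
/-- `y = aη + a cos φ` with `a = 2b`. -/
def yF (ω k : ℝ) (φ q Φ Q : ℝ) : ℝ := 2*bb ω Φ*etaF ω k q Φ + 2*bb ω Φ * Real.cos φ
/-- `X = −2Bη − B cos φ` with `B = bω`. -/
def XF (ω k : ℝ) (φ q Φ Q : ℝ) : ℝ := -(2*(bb ω Φ*ω)*etaF ω k q Φ) - (bb ω Φ*ω) * Real.cos φ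
/-- `Y = −Bξ − B sin φ` with `B = bω`. -/
def YF (ω k : ℝ) (φ q Φ Q : ℝ) : ℝ := -((bb ω Φ*ω)*xiF ω k Φ Q) - (bb ω Φ*ω) * Real.sin φ

/-! For `Φ > 0` each of `x, y, X, Y` has the shape `α q + β Q + b(Φ) (c cos φ + s sin φ)`.
The Poisson bracket of two functions of this shape is the constant
`b b' (s c' - c s') + (α β' - β α')`, by `sin² + cos² = 1`, and `b b' = 1/ω` because
`b² = 2Φ/ω`. The six bracket conditions thus reduce to arithmetic on the coefficients. -/

def epicycleForm (r : ℝ → ℝ) (α β c s : ℝ) (φ q Φ Q : ℝ) : ℝ :=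
  α * q + β * Q + r Φ * (c * cos φ + s * sin φ)

theorem pb_congr {f f' g g' : ℝ → ℝ → ℝ → ℝ → ℝ} {U : Set ℝ} (hU : IsOpen U)
    (hf : ∀ φ q Φ Q, Φ ∈ U → f φ q Φ Q = f' φ q Φ Q)
    (hg : ∀ φ q Φ Q, Φ ∈ U → g φ q Φ Q = g' φ q Φ Q)
    {φ q Φ Q : ℝ} (hΦ : Φ ∈ U) :
    pb f g φ q Φ Q = pb f' g' φ q Φ Q := by
  have slot3 : ∀ {h h' : ℝ → ℝ → ℝ → ℝ → ℝ}, (∀ φ q Φ Q, Φ ∈ U → h φ q Φ Q = h' φ q Φ Q) →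
      pd3 h φ q Φ Q = pd3 h' φ q Φ Q := fun hh =>
    Filter.EventuallyEq.deriv_eq
      (Filter.eventually_of_mem (hU.mem_nhds hΦ) fun t ht => hh _ _ _ _ ht)
  simp only [pb, pd1, pd2, pd4, hf _ _ _ _ hΦ, hg _ _ _ _ hΦ, slot3 hf, slot3 hg]

theorem pb_epicycleForm {r : ℝ → ℝ} {Φ : ℝ} (hr : DifferentiableAt ℝ r Φ)
    (α β c s α' β' c' s' φ q Q : ℝ) :
    pb (epicycleForm r α β c s) (epicycleForm r α' β' c' s') φ q Φ Q =
      r Φ * deriv r Φ * (s * c' - c * s') + (α * β' - β * α') := by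
  have d1 : ∀ α β c s, pd1 (epicycleForm r α β c s) φ q Φ Q = r Φ * (s * cos φ - c * sin φ) :=
    fun α β c s => by simp [pd1, epicycleForm, sub_eq_add_neg, add_comm]
  have d2 : ∀ α β c s, pd2 (epicycleForm r α β c s) φ q Φ Q = α := fun α β c s => by
    simp [pd2, epicycleForm]
  have d3 : ∀ α β c s, pd3 (epicycleForm r α β c s) φ q Φ Q =
      deriv r Φ * (c * cos φ + s * sin φ) := fun α β c s =>
    ((hr.hasDerivAt.mul_const (c * cos φ + s * sin φ)).const_add (α * q + β * Q)).deriv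
  have d4 : ∀ α β c s, pd4 (epicycleForm r α β c s) φ q Φ Q = β := fun α β c s => by
    simp [pd4, epicycleForm]
  simp only [pb, d1, d2, d3, d4]
  linear_combination r Φ * deriv r Φ * (s * c' - c * s') * sin_sq_add_cos_sq φ

theorem bb_ne_zero {ω Φ : ℝ} (hω : 0 < ω) (hΦ : 0 < Φ) : bb ω Φ ≠ 0 :=
  (sqrt_pos.mpr (by positivity)).ne'

theorem hasDerivAt_bb {ω Φ : ℝ} (hω : 0 < ω) (hΦ : 0 < Φ) :
    HasDerivAt (bb ω) (1 / (2 * bb ω Φ) * (2 / ω)) Φ :=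
  (hasDerivAt_sqrt (by positivity)).comp Φ
    (by simpa using ((hasDerivAt_id Φ).const_mul 2).div_const ω)

theorem bb_mul_deriv_bb {ω Φ : ℝ} (hω : 0 < ω) (hΦ : 0 < Φ) :
    bb ω Φ * deriv (bb ω) Φ = 1 / ω := by
  have := bb_ne_zero hω hΦ
  rw [(hasDerivAt_bb hω hΦ).deriv]
  field_simp

theorem xF_eq_epicycleForm {ω k : ℝ} (hω : 0 < ω) (hk : k ≠ 0) (φ q Φ Q : ℝ) (hΦ : 0 < Φ) :
    xF ω k φ q Φ Q = epicycleForm (bb ω) 0 (1 / (k * ω)) 0 1 φ q Φ Q := by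
  have := bb_ne_zero hω hΦ
  simp only [xF, xiF, epicycleForm]
  field_simp
  ring

theorem yF_eq_epicycleForm {ω k : ℝ} (hω : 0 < ω) (φ q Φ Q : ℝ) (hΦ : 0 < Φ) :
    yF ω k φ q Φ Q = epicycleForm (bb ω) (2 * k) 0 2 0 φ q Φ Q := by
  have := bb_ne_zero hω hΦ
  simp only [yF, etaF, epicycleForm]
  field_simp
  ring

theorem XF_eq_epicycleForm {ω k : ℝ} (hω : 0 < ω) (φ q Φ Q : ℝ) (hΦ : 0 < Φ) :
    XF ω k φ q Φ Q = epicycleForm (bb ω) (-2 * k * ω) 0 (-ω) 0 φ q Φ Q := by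
  have := bb_ne_zero hω hΦ
  simp only [XF, etaF, epicycleForm]
  field_simp
  ring

theorem YF_eq_epicycleForm {ω k : ℝ} (hω : 0 < ω) (hk : k ≠ 0) (φ q Φ Q : ℝ) (hΦ : 0 < Φ) :
    YF ω k φ q Φ Q = epicycleForm (bb ω) 0 (-1 / (2 * k)) 0 (-ω) φ q Φ Q := by
  have := bb_ne_zero hω hΦ
  simp only [YF, xiF, epicycleForm]
  field_simp
  ring

/-- The transformation to epicyclic variables is canonical: it preserves the
symplectic form `dx∧dX + dy∧dY = dφ∧dΦ + dq∧dQ`, expressed through the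
Poisson-bracket conditions with respect to `(φ,q,Φ,Q)`. -/
theorem epicyclic_transformation_canonical (ω k : ℝ) (hω : 0 < ω) (hk : 0 < k)
    (φ q Φ Q : ℝ) (hΦ : 0 < Φ) :
    pb (xF ω k) (XF ω k) φ q Φ Q = 1 ∧
    pb (yF ω k) (YF ω k) φ q Φ Q = 1 ∧
    pb (xF ω k) (yF ω k) φ q Φ Q = 0 ∧
    pb (xF ω k) (YF ω k) φ q Φ Q = 0 ∧
    pb (XF ω k) (yF ω k) φ q Φ Q = 0 ∧
    pb (XF ω k) (YF ω k) φ q Φ Q = 0 := by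
  have hx := xF_eq_epicycleForm hω hk.ne'
  have hy := yF_eq_epicycleForm (k := k) hω
  have hX := XF_eq_epicycleForm (k := k) hω
  have hY := YF_eq_epicycleForm hω hk.ne'
  have hbb : DifferentiableAt ℝ (bb ω) Φ := (hasDerivAt_bb hω hΦ).differentiableAt
  simp only [pb_congr isOpen_Ioi hx hX hΦ, pb_congr isOpen_Ioi hy hY hΦ,
    pb_congr isOpen_Ioi hx hy hΦ, pb_congr isOpen_Ioi hx hY hΦ, pb_congr isOpen_Ioi hX hy hΦ,
    pb_congr isOpen_Ioi hX hY hΦ, pb_epicycleForm hbb, bb_mul_deriv_bb hω hΦ]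
  refine ⟨?_, ?_, ?_, ?_, ?_, ?_⟩ <;> field_simp <;> ring
end
end

section
/- Under the epicyclic transformation x = 2bξ + b sin φ, y = aη + a cos φ, X = −2Bη − B cos φ, Y = −Bξ − B sin φ (with a = 2b, B = bω, b = √(2Φ/ω), ξ = Q/(2kωb), η = kq/b), the quadratic Hamiltonian Q(x,y,X,Y) = ½(X+ωy)² + ½(Y−ωx)² − (3/2)ω²x² becomes ωΦ − (3/8)(Q/k)², independent of φ and q. -/
open Real

noncomputable section

def cwHamiltonian (ω x y X Y : ℝ) : ℝ :=
  (1/2)*(X + ω*y)^2 + (1/2)*(Y - ω*x)^2 - (3/2)*ω^2*x^2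

/-- In epicyclic coordinates `X + ωy = bω cos φ` and `Y - ωx = -3bωξ - 2bω sin φ`, so the
cross terms in `ξ sin φ` cancel and `sin² φ + cos² φ = 1` removes the phase. -/
theorem cwHamiltonian_epicyclic (ω b ξ η φ : ℝ) :
    cwHamiltonian ω (2*b*ξ + b*sin φ) (2*b*η + 2*b*cos φ)
        (-(2*(b*ω)*η) - (b*ω)*cos φ) (-((b*ω)*ξ) - (b*ω)*sin φ)
      = (b*ω)^2/2 - (3/8)*(2*ω*b*ξ)^2 := by
  unfold cwHamiltonian
  linear_combination ((b*ω)^2/2) * sin_sq_add_cos_sq φ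

theorem bb_pos {ω Φ : ℝ} (hω : 0 < ω) (hΦ : 0 < Φ) : 0 < bb ω Φ :=
  sqrt_pos.mpr (by positivity)

theorem bb_mul_sq_div_two {ω Φ : ℝ} (hω : 0 < ω) (hΦ : 0 ≤ Φ) :
    (bb ω Φ * ω)^2/2 = ω*Φ := by
  rw [mul_pow, bb, sq_sqrt (by positivity)]
  field_simp

theorem two_mul_mul_xiF {ω Φ : ℝ} (k Q : ℝ) (h : 2*ω*bb ω Φ ≠ 0) :
    2*ω*bb ω Φ * xiF ω k Φ Q = Q/k := by
  rw [xiF, show 2*k*ω*bb ω Φ = k*(2*ω*bb ω Φ) by ring, ← div_div, mul_div_cancel₀ _ h]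

theorem quadratic_hamiltonian_reduced_general (ω k : ℝ) (hω : 0 < ω)
    (φ q Φ Q : ℝ) (hΦ : 0 < Φ) :
    (1/2)*(XF ω k φ q Φ Q + ω * yF ω k φ q Φ Q)^2
      + (1/2)*(YF ω k φ q Φ Q - ω * xF ω k φ q Φ Q)^2
      - (3/2)*ω^2*(xF ω k φ q Φ Q)^2
      = ω*Φ - (3/8)*(Q/k)^2 := by
  have key := cwHamiltonian_epicyclic ω (bb ω Φ) (xiF ω k Φ Q) (etaF ω k q Φ) φ
  rw [bb_mul_sq_div_two hω hΦ.le,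
    two_mul_mul_xiF k Q (by have := bb_pos hω hΦ; positivity)] at key
  exact key

/-- Under the epicyclic transformation, the Clohessy–Wiltshire quadratic
Hamiltonian `½(X+ωy)² + ½(Y−ωx)² − (3/2)ω²x²` becomes `ωΦ − (3/8)(Q/k)²`,
independent of `φ` and `q`. -/
theorem quadratic_hamiltonian_reduced (ω k : ℝ) (hω : 0 < ω) (hk : 0 < k)
    (φ q Φ Q : ℝ) (hΦ : 0 < Φ) :
    (1/2)*(XF ω k φ q Φ Q + ω * yF ω k φ q Φ Q)^2
      + (1/2)*(YF ω k φ q Φ Q - ω * xF ω k φ q Φ Q)^2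
      - (3/2)*ω^2*(xF ω k φ q Φ Q)^2
      = ω*Φ - (3/8)*(Q/k)^2 :=
  quadratic_hamiltonian_reduced_general ω k hω φ q Φ Q hΦ
end
end
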